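/- arXiv:2604.10831 — 3 statements merged into one kernel-verified Lean document; each statement's English description precedes it below -/
import Mathlib

section
/- Fix a policy π and suppose σ̲_{r,a}^π > 0 for every deviation pair (r,a) with m_r(π;μ₀) > 0. Define the certified radius ρ̂(π) = min over such pairs of [σ̲_{r,a}^π · m_r(π;μ₀)] / [|Ω|^{1/q} · M_{r,a}^π]. Then for every ε ∈ [0, ρ̂(π)] and every belief μ ∈ Δ(Ω) with ‖μ − μ₀‖_p ≤ ε (where 1/p + 1/q = 1), and every deviation pair (r,a), the obedience slack satisfies A_{r,a}(π;μ) ≥ 0. -/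
open Finset
open scoped ENNReal

def IsBelief {Ω : Type*} [Fintype Ω] (μ : Ω → ℝ) : Prop :=
  (∀ ω, 0 ≤ μ ω) ∧ ∑ ω, μ ω = 1

noncomputable def costDiff {Ω E X : Type*}
    (flow : X → E → ℝ) (ℓ : Ω → E → ℝ → ℝ) (r a : E) (p : Ω × X) : ℝ :=
  ℓ p.1 a (flow p.2 a) - ℓ p.1 r (flow p.2 r)

def rsupp {Ω E X : Type*} (flow : X → E → ℝ) (π : Ω → X → ℝ) (r : E) : Set (Ω × X) :=
  {p : Ω × X | 0 < π p.1 p.2 * flow p.2 r}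

/-- `σ̲_{r,a}^π`: worst-case deviation gap over the support of route `r`. -/
noncomputable def sigmaLo {Ω E X : Type*}
    (flow : X → E → ℝ) (ℓ : Ω → E → ℝ → ℝ) (π : Ω → X → ℝ) (r a : E) : ℝ :=
  sInf (costDiff flow ℓ r a '' rsupp flow π r)

/-- `M_{r,a}^π = max(|σ̲|, |σ̄|)`. -/
noncomputable def sigmaM {Ω E X : Type*}
    (flow : X → E → ℝ) (ℓ : Ω → E → ℝ → ℝ) (π : Ω → X → ℝ) (r a : E) : ℝ :=
  max |sInf (costDiff flow ℓ r a '' rsupp flow π r)|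
      |sSup (costDiff flow ℓ r a '' rsupp flow π r)|

/-- Expected recommendation mass `m_r(π;μ₀)`. -/
noncomputable def rmass {Ω E X : Type*} [Fintype Ω] [Fintype X]
    (flow : X → E → ℝ) (π : Ω → X → ℝ) (μ₀ : Ω → ℝ) (r : E) : ℝ :=
  ∑ ω, μ₀ ω * ∑ x, π ω x * flow x r

/-! The obedience slack under a belief `μ` is its value under the prior `μ₀` plus the
correction `∑ ω, (μ ω - μ₀ ω) d^ω`. On every route with positive mass, each state's slack
`d^ω` is a sub-probability average of deviation gaps, hence bounded by `M` in absolute value,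
while under the prior the slack is at least `σ̲ · m_r`. The correction is at most
`M ‖μ - μ₀‖₁ ≤ M |Ω|^{1/q} ‖μ - μ₀‖_p ≤ M |Ω|^{1/q} ε` by Hölder's inequality, and
`ε ≤ ρ̂` is exactly what makes this at most `σ̲ · m_r`. Routes of zero mass have zero slack
because the prior has full support. -/

section Inequalities

variable {ι : Type*} [Fintype ι]

theorem sum_abs_le_card_rpow_mul_norm_toLp (p q : ℝ≥0∞) [p.HolderConjugate q]
    (c : ι → ℝ) :
    ∑ i, |c i| ≤ (Fintype.card ι : ℝ) ^ (1 / q).toReal * ‖WithLp.toLp p c‖ := by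
  rcases eq_or_ne p ∞ with rfl | hp
  · obtain rfl : q = 1 := (ENNReal.HolderConjugate.eq_top_iff_eq_one ∞ q).mp rfl
    calc ∑ i, |c i| ≤ ∑ _i : ι, ‖WithLp.toLp ∞ c‖ :=
          sum_le_sum fun i _ => PiLp.norm_apply_le (WithLp.toLp ∞ c) i
      _ = _ := by simp
  rcases eq_or_ne q ∞ with rfl | hq
  · obtain rfl : p = 1 := (ENNReal.HolderConjugate.eq_top_iff_eq_one ∞ p).mp rfl
    simp [PiLp.norm_eq_sum (p := 1) (by simp)]
  have hpqReal := ENNReal.HolderConjugate.toReal_of_ne_top hp hq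
  have holder := Real.inner_le_Lp_mul_Lq_of_nonneg univ hpqReal (f := fun i => |c i|)
    (g := fun _ => 1) (fun i _ => abs_nonneg (c i)) (fun _ _ => zero_le_one)
  simp only [mul_one, Real.one_rpow, sum_const, card_univ, nsmul_eq_mul] at holder
  rw [PiLp.norm_eq_sum hpqReal.pos, ENNReal.toReal_div, ENNReal.toReal_one, mul_comm]
  simpa using holder

theorem abs_sum_mul_le_of_sum_le_one {w f : ι → ℝ} {M : ℝ} (hw : ∀ i, 0 ≤ w i)
    (hsum : ∑ i, w i ≤ 1) (hM : 0 ≤ M) (hf : ∀ i, 0 < w i → |f i| ≤ M) :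
    |∑ i, w i * f i| ≤ M :=
  calc |∑ i, w i * f i| ≤ ∑ i, w i * |f i| := by
        refine (abs_sum_le_sum_abs _ _).trans_eq (sum_congr rfl fun i _ => ?_)
        rw [abs_mul, abs_of_nonneg (hw i)]
    _ ≤ ∑ i, w i * M := by
        refine sum_le_sum fun i _ => ?_
        rcases (hw i).eq_or_lt with h | h
        · simp [← h]
        · exact mul_le_mul_of_nonneg_left (hf i h) h.le
    _ = (∑ i, w i) * M := (sum_mul ..).symm
    _ ≤ M := mul_le_of_le_one_left hM hsum

theorem mul_sum_le_sum_mul_of_le {w f : ι → ℝ} {s : ℝ} (hw : ∀ i, 0 ≤ w i)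
    (hf : ∀ i, 0 < w i → s ≤ f i) : s * ∑ i, w i ≤ ∑ i, w i * f i := by
  rw [mul_sum]
  refine sum_le_sum fun i _ => ?_
  rcases (hw i).eq_or_lt with h | h
  · simp [← h]
  · rw [mul_comm]
    exact mul_le_mul_of_nonneg_left (hf i h) h.le

theorem sum_mul_sub_sum_mul_le {μ ν d : ι → ℝ} {M : ℝ} (hd : ∀ i, |d i| ≤ M) :
    ∑ i, ν i * d i - ∑ i, μ i * d i ≤ M * ∑ i, |μ i - ν i| := by
  rw [← sum_sub_distrib, mul_sum]
  refine sum_le_sum fun i _ => ?_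
  calc ν i * d i - μ i * d i = -((μ i - ν i) * d i) := by ring
    _ ≤ |μ i - ν i| * |d i| := (neg_le_abs _).trans (abs_mul ..).le
    _ ≤ M * |μ i - ν i| := by
        rw [mul_comm]
        exact mul_le_mul_of_nonneg_right (hd i) (abs_nonneg _)

end Inequalities

-- `d_{r,a}^ω(π)`
noncomputable def stateSlack {Ω E X : Type*} [Fintype X]
    (flow : X → E → ℝ) (ℓ : Ω → E → ℝ → ℝ) (π : Ω → X → ℝ) (r a : E) (ω : Ω) : ℝ :=
  ∑ x, π ω x * flow x r * costDiff flow ℓ r a (ω, x)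

section Policy

variable {Ω E X : Type*} {flow : X → E → ℝ} {ℓ : Ω → E → ℝ → ℝ} {π : Ω → X → ℝ} {r a : E}

theorem sigmaM_nonneg : 0 ≤ sigmaM flow ℓ π r a :=
  le_max_of_le_left (abs_nonneg _)

theorem sigmaLo_le_costDiff [Finite Ω] [Finite X] {p : Ω × X} (hp : p ∈ rsupp flow π r) :
    sigmaLo flow ℓ π r a ≤ costDiff flow ℓ r a p :=
  csInf_le ((Set.toFinite _).image _).bddBelow (Set.mem_image_of_mem _ hp)

theorem abs_costDiff_le_sigmaM [Finite Ω] [Finite X] {p : Ω × X} (hp : p ∈ rsupp flow π r) :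
    |costDiff flow ℓ r a p| ≤ sigmaM flow ℓ π r a := by
  have hfin := (Set.toFinite (rsupp flow π r)).image (costDiff flow ℓ r a)
  have hmem := Set.mem_image_of_mem (costDiff flow ℓ r a) hp
  refine abs_le.mpr ⟨?_, ?_⟩
  · exact (neg_le_neg (le_max_left _ _)).trans
      ((neg_abs_le _).trans (csInf_le hfin.bddBelow hmem))
  · exact (le_csSup hfin.bddAbove hmem).trans (le_max_of_le_right (le_abs_self _))

theorem sum_mul_flow_le_one [Fintype E] [Fintype X] {ω : Ω} (hπ : ∀ x, 0 ≤ π ω x)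
    (hπ₁ : ∑ x, π ω x = 1) (hflow : ∀ x, (∀ e, 0 ≤ flow x e) ∧ ∑ e, flow x e = 1) :
    ∑ x, π ω x * flow x r ≤ 1 :=
  calc ∑ x, π ω x * flow x r ≤ ∑ x, π ω x * 1 := by
        refine sum_le_sum fun x _ => mul_le_mul_of_nonneg_left ?_ (hπ x)
        exact (hflow x).2 ▸ single_le_sum (fun e _ => (hflow x).1 e) (mem_univ r)
    _ = 1 := by simp [hπ₁]

theorem abs_stateSlack_le_sigmaM [Finite Ω] [Fintype E] [Fintype X]
    (hπ : ∀ ω, (∀ x, 0 ≤ π ω x) ∧ ∑ x, π ω x = 1)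
    (hflow : ∀ x, (∀ e, 0 ≤ flow x e) ∧ ∑ e, flow x e = 1) (ω : Ω) :
    |stateSlack flow ℓ π r a ω| ≤ sigmaM flow ℓ π r a :=
  abs_sum_mul_le_of_sum_le_one (fun x => mul_nonneg ((hπ ω).1 x) ((hflow x).1 r))
    (sum_mul_flow_le_one (hπ ω).1 (hπ ω).2 hflow) sigmaM_nonneg
    fun _ hx => abs_costDiff_le_sigmaM hx

variable [Fintype Ω] [Fintype X] {μ₀ : Ω → ℝ}

theorem rmass_nonneg (hμ₀ : ∀ ω, 0 ≤ μ₀ ω) (hπ : ∀ ω x, 0 ≤ π ω x)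
    (hflow : ∀ x e, 0 ≤ flow x e) : 0 ≤ rmass flow π μ₀ r :=
  sum_nonneg fun ω _ => mul_nonneg (hμ₀ ω) (sum_nonneg fun x _ => mul_nonneg (hπ ω x) (hflow x r))

theorem sigmaLo_mul_rmass_le (hμ₀ : ∀ ω, 0 ≤ μ₀ ω) (hπ : ∀ ω x, 0 ≤ π ω x)
    (hflow : ∀ x e, 0 ≤ flow x e) :
    sigmaLo flow ℓ π r a * rmass flow π μ₀ r ≤ ∑ ω, μ₀ ω * stateSlack flow ℓ π r a ω := by
  rw [rmass, mul_sum]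
  refine sum_le_sum fun ω _ => ?_
  rw [mul_left_comm]
  exact mul_le_mul_of_nonneg_left (mul_sum_le_sum_mul_of_le
    (fun x => mul_nonneg (hπ ω x) (hflow x r)) fun _ hx => sigmaLo_le_costDiff hx) (hμ₀ ω)

theorem stateSlack_eq_zero_of_rmass_eq_zero (hμ₀ : ∀ ω, 0 < μ₀ ω)
    (hπ : ∀ ω x, 0 ≤ π ω x) (hflow : ∀ x e, 0 ≤ flow x e) (hm : rmass flow π μ₀ r = 0)
    (ω : Ω) : stateSlack flow ℓ π r a ω = 0 := by
  have hw : ∀ ω x, 0 ≤ π ω x * flow x r := fun ω x => mul_nonneg (hπ ω x) (hflow x r)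
  have hmass : μ₀ ω * ∑ x, π ω x * flow x r = 0 :=
    (sum_eq_zero_iff_of_nonneg fun ω _ => mul_nonneg (hμ₀ ω).le (sum_nonneg fun x _ => hw ω x)).mp
      hm ω (mem_univ ω)
  have hw₀ := (sum_eq_zero_iff_of_nonneg fun x _ => hw ω x).mp
    ((mul_eq_zero.mp hmass).resolve_left (hμ₀ ω).ne')
  exact sum_eq_zero fun x hx => by rw [hw₀ x hx, zero_mul]

end Policy

theorem certified_epsilon_range_policy_general
    {Ω E X : Type*} [Fintype Ω] [Fintype E] [Fintype X]
    (p q : ℝ≥0∞) (hpq : 1 / p + 1 / q = 1)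
    (flow : X → E → ℝ) (hflow : ∀ x : X, (∀ e, 0 ≤ flow x e) ∧ ∑ e, flow x e = 1)
    (ℓ : Ω → E → ℝ → ℝ)
    (π : Ω → X → ℝ) (hπ : ∀ ω, (∀ x, 0 ≤ π ω x) ∧ ∑ x, π ω x = 1)
    (μ₀ : Ω → ℝ) (hμ₀pos : ∀ ω, 0 < μ₀ ω)
    (hσ : ∀ r a : E, r ≠ a → 0 < rmass flow π μ₀ r → 0 < sigmaLo flow ℓ π r a)
    (ρhat : ℝ)
    (hρhat : ρhat = sInf {v : ℝ | ∃ r a : E, r ≠ a ∧ 0 < rmass flow π μ₀ r ∧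
      v = sigmaLo flow ℓ π r a * rmass flow π μ₀ r /
            ((Fintype.card Ω : ℝ) ^ (1 / q).toReal * sigmaM flow ℓ π r a)}) :
    ∀ ε : ℝ, 0 ≤ ε → ε ≤ ρhat →
      ∀ μ : Ω → ℝ, IsBelief μ →
        ‖(WithLp.equiv p (Ω → ℝ)).symm (μ - μ₀)‖ ≤ ε →
        ∀ r a : E, r ≠ a →
          0 ≤ ∑ ω, μ ω * ∑ x, π ω x * flow x r * costDiff flow ℓ r a (ω, x) := by
  intro ε _ hερ μ _ hdist r a hra
  set d := stateSlack flow ℓ π r a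
  change 0 ≤ ∑ ω, μ ω * d ω
  have hπ₀ : ∀ ω x, 0 ≤ π ω x := fun ω => (hπ ω).1
  have hflow₀ : ∀ x e, 0 ≤ flow x e := fun x => (hflow x).1
  rcases (rmass_nonneg (fun ω => (hμ₀pos ω).le) hπ₀ hflow₀ (r := r)).eq_or_lt with hm | hm
  · simp [d, stateSlack_eq_zero_of_rmass_eq_zero hμ₀pos hπ₀ hflow₀ hm.symm]
  have : p.HolderConjugate q := ENNReal.holderConjugate_iff.mpr (by simpa only [one_div] using hpq)
  set n := (Fintype.card Ω : ℝ) ^ (1 / q).toReal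
  set M := sigmaM flow ℓ π r a
  have hn : 0 ≤ n := by positivity
  have hM : 0 ≤ M := sigmaM_nonneg
  have hρ : ε ≤ sigmaLo flow ℓ π r a * rmass flow π μ₀ r / (n * M) := by
    refine hερ.trans (hρhat ▸ csInf_le ⟨0, ?_⟩ ⟨r, a, hra, hm, rfl⟩)
    rintro _ ⟨r', a', hra', hm', rfl⟩
    exact div_nonneg (mul_pos (hσ r' a' hra' hm') hm').le (mul_nonneg hn sigmaM_nonneg)
  have hε := mul_le_of_le_div₀ (mul_pos (hσ r a hra hm) hm).le (mul_nonneg hn hM) hρ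
  have hℓ₁ : ∑ ω, |μ ω - μ₀ ω| ≤ n * ε :=
    (sum_abs_le_card_rpow_mul_norm_toLp p q (μ - μ₀)).trans (mul_le_mul_of_nonneg_left hdist hn)
  have hnom : sigmaLo flow ℓ π r a * rmass flow π μ₀ r ≤ ∑ ω, μ₀ ω * d ω :=
    sigmaLo_mul_rmass_le (fun ω => (hμ₀pos ω).le) hπ₀ hflow₀
  have hpert : ∑ ω, μ₀ ω * d ω - ∑ ω, μ ω * d ω ≤ M * ∑ ω, |μ ω - μ₀ ω| :=
    sum_mul_sub_sum_mul_le (abs_stateSlack_le_sigmaM hπ hflow)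
  linarith [mul_le_mul_of_nonneg_left hℓ₁ hM]

/-- Certified robustness range for a fixed policy: if `σ̲_{r,a}^π > 0` for all pairs with
positive recommendation mass, then `π` remains obedient for every belief within
`ℓ_p`-distance `ε ≤ ρ̂(π)` of the nominal prior. -/
theorem certified_epsilon_range_policy
    {Ω E X : Type*} [Fintype Ω] [Fintype E] [Fintype X] [Nonempty Ω]
    (p q : ℝ≥0∞) [Fact (1 ≤ p)] (hpq : 1 / p + 1 / q = 1)
    (flow : X → E → ℝ) (hflow : ∀ x : X, (∀ e, 0 ≤ flow x e) ∧ ∑ e, flow x e = 1)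
    (ℓ : Ω → E → ℝ → ℝ)
    (π : Ω → X → ℝ) (hπ : ∀ ω, (∀ x, 0 ≤ π ω x) ∧ ∑ x, π ω x = 1)
    (μ₀ : Ω → ℝ) (hμ₀ : IsBelief μ₀) (hμ₀pos : ∀ ω, 0 < μ₀ ω)
    (hσ : ∀ r a : E, r ≠ a → 0 < rmass flow π μ₀ r → 0 < sigmaLo flow ℓ π r a)
    (ρhat : ℝ)
    (hρhat : ρhat = sInf {v : ℝ | ∃ r a : E, r ≠ a ∧ 0 < rmass flow π μ₀ r ∧
      v = sigmaLo flow ℓ π r a * rmass flow π μ₀ r /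
            ((Fintype.card Ω : ℝ) ^ (1 / q).toReal * sigmaM flow ℓ π r a)}) :
    ∀ ε : ℝ, 0 ≤ ε → ε ≤ ρhat →
      ∀ μ : Ω → ℝ, IsBelief μ →
        ‖(WithLp.equiv p (Ω → ℝ)).symm (μ - μ₀)‖ ≤ ε →
        ∀ r a : E, r ≠ a →
          0 ≤ ∑ ω, μ ω * ∑ x, π ω x * flow x r * costDiff flow ℓ r a (ω, x) :=
  certified_epsilon_range_policy_general p q hpq flow hflow ℓ π hπ μ₀ hμ₀pos hσ ρhat hρhat
end

section
/- Consider the two-edge, two-state example with X = {x⁰}, x⁰ = (1,0), constant latencies ℓ_1^{ω₁}=0, ℓ_2^{ω₁}=2, ℓ_1^{ω₂}=2, ℓ_2^{ω₂}=1, and nominal prior μ₀(ω₁)=1/3, μ₀(ω₂)=2/3. Then the unique policy π⁰ (with π⁰_ω(x⁰)=1) has obedience slack A_{1,2}(π⁰;μ) = 3μ(ω₁) − 1 for every belief μ, so that A_{1,2}(π⁰;μ₀) = 0, and for every ε > 0 there exists μ ∈ Δ(Ω) with ‖μ−μ₀‖ ≤ ε and A_{1,2}(π⁰;μ) < 0.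 Hence the robust obedience region OC̄_ε(μ₀) is empty for all ε > 0. -/
open Finset

noncomputable def slack {Ω E X : Type*} [Fintype Ω] [Fintype X]
    (flow : X → E → ℝ) (ℓ : Ω → E → ℝ → ℝ) (π : Ω → X → ℝ)
    (μ : Ω → ℝ) (r a : E) : ℝ :=
  ∑ ω, μ ω * ∑ x, π ω x * (flow x r * (ℓ ω a (flow x a) - ℓ ω r (flow x r)))

/-- The single admissible flow profile `x⁰ = (1,0)` in the two-edge example. -/
noncomputable def exFlow : Unit → Fin 2 → ℝ := fun _ => ![1, 0]

/-- Constant latencies: `ℓ₁^{ω₁}=0, ℓ₂^{ω₁}=2, ℓ₁^{ω₂}=2, ℓ₂^{ω₂}=1`. -/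
noncomputable def exLat : Fin 2 → Fin 2 → ℝ → ℝ :=
  fun ω e _ => if ω = 0 then (if e = 0 then 0 else 2) else (if e = 0 then 2 else 1)

/-- The unique signaling policy, putting all mass on `x⁰` in each state. -/
noncomputable def exPol : Fin 2 → Unit → ℝ := fun _ _ => 1

/-- The nominal prior `μ₀ = (1/3, 2/3)`. -/
noncomputable def exPrior : Fin 2 → ℝ := ![1/3, 2/3]

lemma slack_eq (μ : Fin 2 → ℝ) :
    slack exFlow exLat exPol μ 0 1 = 2 * μ 0 - μ 1 := by
  simp [slack, exFlow, exLat, exPol, Fin.sum_univ_two]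
  ring

/-- In the constrained two-edge example, `A_{1,2}(π⁰;μ) = 3μ(ω₁) − 1` for every belief,
which vanishes at the nominal prior; for every `ε > 0` some nearby belief violates
obedience, so the robust obedience region is empty for all `ε > 0` (the sup norm on
`ℝ²` is used for the belief ball). -/
theorem constrained_example_robust_infeasible :
    (∀ μ : Fin 2 → ℝ, IsBelief μ → slack exFlow exLat exPol μ 0 1 = 3 * μ 0 - 1) ∧
    slack exFlow exLat exPol exPrior 0 1 = 0 ∧
    (∀ ε : ℝ, 0 < ε → ∃ μ : Fin 2 → ℝ, IsBelief μ ∧ ‖μ - exPrior‖ ≤ ε ∧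
      slack exFlow exLat exPol μ 0 1 < 0) ∧
    (∀ ε : ℝ, 0 < ε → ¬ ∀ μ : Fin 2 → ℝ, IsBelief μ → ‖μ - exPrior‖ ≤ ε →
      ∀ r a : Fin 2, r ≠ a → 0 ≤ slack exFlow exLat exPol μ r a) := by
  have key : ∀ ε : ℝ, 0 < ε → ∃ μ : Fin 2 → ℝ, IsBelief μ ∧ ‖μ - exPrior‖ ≤ ε ∧
      slack exFlow exLat exPol μ 0 1 < 0 := by
    intro ε hε
    set δ : ℝ := min ε (1/3) with hδdef
    have hδpos : 0 < δ := lt_min hε (by norm_num)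
    have hδle : δ ≤ 1/3 := min_le_right _ _
    have hδε : δ ≤ ε := min_le_left _ _
    refine ⟨![1/3 - δ, 2/3 + δ], ⟨?_, ?_⟩, ?_, ?_⟩
    · intro ω; fin_cases ω <;> simp <;> linarith
    · simp [Fin.sum_univ_two]; ring
    · rw [pi_norm_le_iff_of_nonneg hε.le]
      intro i; fin_cases i <;>
        simp [exPrior, Real.norm_eq_abs, abs_le] <;> constructor <;> linarith
    · rw [slack_eq]; simp; linarith
  refine ⟨?_, ?_, key, ?_⟩
  · intro μ hμ
    have h1 : μ 0 + μ 1 = 1 := by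
      have := hμ.2; simpa [Fin.sum_univ_two] using this
    rw [slack_eq]; linarith
  · rw [slack_eq]; simp [exPrior]; norm_num
  · intro ε hε h
    obtain ⟨μ, hb, hn, hs⟩ := key ε hε
    exact absurd (h μ hb hn 0 1 (by norm_num)) (not_le.mpr hs)
end

section
/- Let π be a signaling policy on a (possibly infinite) compact metric recommendation space X ⊆ Δ(E), with π_ω a Borel probability measure on X for each ω ∈ Ω, and assume all latency functions ℓ_e^ω are continuous. Then there exist a finite subset X̃ ⊆ X with |X̃| ≤ |Ω|·(|J|+2) (where J is the set of deviation pairs) and finitely supported measures π̃_ω ∈ Δ(X̃) such that C(π̃) = C(π) and A_{r,a}(π̃;μ) = A_{r,a}(π;μ) for all (r,a) ∈ J and all μ ∈ Δ(Ω). -/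
open Finset MeasureTheory Module

/-!
For each state `ω`, the vector `Γ^ω(x)` of the cost and all deviation regrets is continuous on the
compact set `X`, so `∫ Γ^ω dπ_ω` lies in the convex hull of the compact set `Γ^ω(X)`, which is
closed in finite dimension. By Carathéodory's theorem in `ℝ^{1+|J|}` it is a convex combination of
at most `|J| + 2` values `Γ^ω(x)` with `x ∈ X`; these weights define `π̃_ω`, and the union of their
supports over `ω` is `X̃`. Cost and obedience slacks are linear in the `∫ Γ^ω dπ_ω`.
-/

section Caratheodory

variable {𝕜 V : Type*} [Field 𝕜] [LinearOrder 𝕜] [IsStrictOrderedRing 𝕜]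
  [AddCommGroup V] [Module 𝕜 V] [FiniteDimensional 𝕜 V]

theorem exists_stdSimplex_sum_smul_eq_of_mem_convexHull {s : Set V} {x : V}
    (hx : x ∈ convexHull 𝕜 s) :
    ∃ w ∈ stdSimplex 𝕜 (Fin (finrank 𝕜 V + 1)), ∃ z : Fin (finrank 𝕜 V + 1) → V,
      (∀ j, z j ∈ s) ∧ ∑ j, w j • z j = x := by
  obtain ⟨ι, _, z, w, hzs, hai, hw0, hw1, rfl⟩ := eq_pos_convex_span_of_mem_convexHull hx
  obtain ⟨k, hk⟩ : s.Nonempty := convexHull_nonempty_iff.mp ⟨_, hx⟩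
  have hcard : Fintype.card ι ≤ Fintype.card (Fin (finrank 𝕜 V + 1)) := by
    rw [Fintype.card_fin]
    exact hai.card_le_finrank_succ.trans (by gcongr; exact Submodule.finrank_le _)
  obtain ⟨e⟩ := Function.Embedding.nonempty_of_card_le hcard
  -- pad the affinely independent family along `e` with zero weights at an arbitrary `k ∈ s`
  have hw_off : ∀ j ∉ Set.range e, Function.extend e w 0 j = 0 := fun j hj =>
    Function.extend_apply' _ _ _ hj
  refine ⟨Function.extend e w 0, ⟨fun j => ?_, ?_⟩, Function.extend e z fun _ => k,
    fun j => ?_, ?_⟩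
  · by_cases hj : j ∈ Set.range e
    · obtain ⟨i, rfl⟩ := hj
      simpa [e.injective.extend_apply] using (hw0 i).le
    · rw [hw_off j hj]
  · rw [← hw1]
    exact (Fintype.sum_of_injective e e.injective _ _ hw_off
      fun i => (e.injective.extend_apply _ _ _).symm).symm
  · by_cases hj : j ∈ Set.range e
    · obtain ⟨i, rfl⟩ := hj
      rw [e.injective.extend_apply]
      exact hzs (Set.mem_range_self i)
    · rw [Function.extend_apply' _ _ _ hj]
      exact hk
  · refine (Fintype.sum_of_injective e e.injective _ _ (fun j hj => ?_) fun i => ?_).symm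
    · rw [hw_off j hj, zero_smul]
    · simp only [e.injective.extend_apply]

end Caratheodory

theorem Finset.sum_image_sum_fiber_smul {ι α R M : Type*} [DecidableEq α] [Semiring R]
    [AddCommMonoid M] [Module R M] (s : Finset ι) (p : ι → α) (w : ι → R) (g : α → M) :
    ∑ y ∈ s.image p, (∑ i ∈ s with p i = y, w i) • g y = ∑ i ∈ s, w i • g (p i) := by
  rw [← sum_fiberwise_of_maps_to fun i hi => mem_image_of_mem p hi]
  refine sum_congr rfl fun y _ => ?_
  rw [sum_smul]
  exact sum_congr rfl fun i hi => by rw [(mem_filter.mp hi).2]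

section FiniteDimensional

variable {V : Type*} [NormedAddCommGroup V] [NormedSpace ℝ V] [FiniteDimensional ℝ V]

theorem convexHull_eq_image_stdSimplex_prod_pi (s : Set V) :
    convexHull ℝ s = (fun p : (Fin (finrank ℝ V + 1) → ℝ) × (Fin (finrank ℝ V + 1) → V) =>
      ∑ j, p.1 j • p.2 j) '' (stdSimplex ℝ _ ×ˢ Set.univ.pi fun _ => s) := by
  refine subset_antisymm (fun x hx => ?_) ?_
  · obtain ⟨w, hw, z, hz, rfl⟩ := exists_stdSimplex_sum_smul_eq_of_mem_convexHull hx
    exact ⟨(w, z), ⟨hw, fun j _ => hz j⟩, rfl⟩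
  · rintro _ ⟨⟨w, z⟩, ⟨hw, hz⟩, rfl⟩
    exact (convex_convexHull ℝ s).sum_mem (fun j _ => hw.1 j) hw.2
      fun j _ => subset_convexHull ℝ s (hz j (Set.mem_univ j))

theorem IsCompact.convexHull {K : Set V} (hK : IsCompact K) : IsCompact (convexHull ℝ K) := by
  rw [convexHull_eq_image_stdSimplex_prod_pi]
  exact ((isCompact_stdSimplex ℝ _).prod (isCompact_univ_pi fun _ => hK)).image (by fun_prop)

theorem exists_finset_sum_smul_eq_of_mem_convexHull_image {α : Type*} {f : α → V} {K : Set α}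
    {x : V} (hx : x ∈ convexHull ℝ (f '' K)) :
    ∃ S : Finset α, ↑S ⊆ K ∧ #S ≤ finrank ℝ V + 1 ∧ ∃ q : α → ℝ, (∀ y, 0 ≤ q y) ∧
      (∀ y ∉ S, q y = 0) ∧ ∑ y ∈ S, q y = 1 ∧ ∑ y ∈ S, q y • f y = x := by
  classical
  obtain ⟨w, hw, z, hz, rfl⟩ := exists_stdSimplex_sum_smul_eq_of_mem_convexHull hx
  choose p hpK hpz using hz
  refine ⟨univ.image p, by simpa [Set.subset_def] using hpK,
    card_image_le.trans (card_univ.trans (Fintype.card_fin _)).le,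
    fun y => ∑ j with p j = y, w j, fun y => sum_nonneg fun j _ => hw.1 j,
    fun y hy => sum_eq_zero fun j hj =>
      absurd (mem_image_of_mem p (mem_univ j)) (by rwa [(mem_filter.mp hj).2]), ?_, ?_⟩
  · simpa [hw.2] using sum_image_sum_fiber_smul univ p w fun _ => (1 : ℝ)
  · simp only [sum_image_sum_fiber_smul, hpz]

end FiniteDimensional

section Integral

variable {α V : Type*} [TopologicalSpace α] [T2Space α] [MeasurableSpace α]
  [OpensMeasurableSpace α] [NormedAddCommGroup V] {K : Set α} {f : α → V}
  {ν : Measure α}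

theorem ContinuousOn.integrable_of_ae_mem_isCompact [IsFiniteMeasure ν] (hf : ContinuousOn f K)
    (hK : IsCompact K) (hνK : ∀ᵐ x ∂ν, x ∈ K) : Integrable f ν := by
  simpa [IntegrableOn, Measure.restrict_eq_self_of_ae_mem hνK] using
    hf.integrableOn_compact (μ := ν) hK

variable [NormedSpace ℝ V] [FiniteDimensional ℝ V] [IsProbabilityMeasure ν]

theorem integral_mem_convexHull_image (hf : ContinuousOn f K) (hK : IsCompact K)
    (hνK : ∀ᵐ x ∂ν, x ∈ K) : ∫ x, f x ∂ν ∈ convexHull ℝ (f '' K) :=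
  (convex_convexHull ℝ _).integral_mem (hK.image_of_continuousOn hf).convexHull.isClosed
    (hνK.mono fun _ hx => subset_convexHull ℝ _ (Set.mem_image_of_mem f hx))
    (hf.integrable_of_ae_mem_isCompact hK hνK)

end Integral

theorem exists_finset_sum_mul_eq_integral_apply {α ι : Type*} [TopologicalSpace α] [T2Space α]
    [MeasurableSpace α] [OpensMeasurableSpace α] [Fintype ι] {K : Set α} {f : α → ι → ℝ}
    (hf : ContinuousOn f K) (hK : IsCompact K) (ν : Measure α) [IsProbabilityMeasure ν]
    (hνK : ∀ᵐ x ∂ν, x ∈ K) :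
    ∃ S : Finset α, ↑S ⊆ K ∧ #S ≤ Fintype.card ι + 1 ∧ ∃ q : α → ℝ, (∀ y, 0 ≤ q y) ∧
      (∀ y ∉ S, q y = 0) ∧ ∑ y ∈ S, q y = 1 ∧
      ∀ i, ∑ y ∈ S, q y * f y i = ∫ x, f x i ∂ν := by
  obtain ⟨S, hSK, hcard, q, hq0, hqS, hq1, hq⟩ :=
    exists_finset_sum_smul_eq_of_mem_convexHull_image (integral_mem_convexHull_image hf hK hνK)
  refine ⟨S, hSK, by simpa using hcard, q, hq0, hqS, hq1, fun i => ?_⟩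
  rw [← eval_integral (hf.integrable_of_ae_mem_isCompact hK hνK).eval i, ← hq]
  simp

/-- The map `Γ^ω`, with the coordinate set `{1} ⊔ J` of `ℝ^{1+|J|}` encoded as `Option J`. -/
def costAndRegrets {Ω E : Type*} [Fintype E] (ℓ : Ω → E → ℝ → ℝ) (ω : Ω) (x : E → ℝ) :
    Option {p : E × E // p.1 ≠ p.2} → ℝ :=
  fun i => i.elim (∑ e, x e * ℓ ω e (x e))
    fun p => x p.1.1 * (ℓ ω p.1.2 (x p.1.2) - ℓ ω p.1.1 (x p.1.1))

theorem continuous_costAndRegrets {Ω E : Type*} [Fintype E] {ℓ : Ω → E → ℝ → ℝ}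
    (hℓ : ∀ ω e, Continuous (ℓ ω e)) (ω : Ω) : Continuous (costAndRegrets ℓ ω) := by
  refine continuous_pi fun i => ?_
  cases i with
  | none => exact continuous_finsetSum _ fun e _ => by have := hℓ ω e; fun_prop
  | some p => have := hℓ ω p.1.1; have := hℓ ω p.1.2; dsimp [costAndRegrets]; fun_prop

theorem finite_support_reduction_general
    {Ω E : Type*} [Fintype Ω] [Fintype E] [DecidableEq E]
    (X : Set (E → ℝ)) (hXc : IsCompact X)
    (ℓ : Ω → E → ℝ → ℝ) (hℓ : ∀ ω e, Continuous (ℓ ω e))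
    (π : Ω → Measure (E → ℝ))
    (hπ : ∀ ω, IsProbabilityMeasure (π ω))
    (hπX : ∀ ω, π ω X = 1)
    (μ₀ : Ω → ℝ) :
    ∃ Xt : Finset (E → ℝ), ↑Xt ⊆ X ∧
      Xt.card ≤ Fintype.card Ω *
        (({p : E × E | p.1 ≠ p.2}.toFinset.card) + 2) ∧
      ∃ πt : Ω → (E → ℝ) → ℝ,
        (∀ ω x, 0 ≤ πt ω x) ∧
        (∀ ω, ∑ x ∈ Xt, πt ω x = 1) ∧
        (∑ ω, μ₀ ω * ∑ x ∈ Xt, πt ω x * (∑ e, x e * ℓ ω e (x e))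
          = ∑ ω, μ₀ ω * ∫ x, (∑ e, x e * ℓ ω e (x e)) ∂(π ω)) ∧
        (∀ (μ : Ω → ℝ) (r a : E), r ≠ a →
          ∑ ω, μ ω * ∑ x ∈ Xt, πt ω x * (x r * (ℓ ω a (x a) - ℓ ω r (x r)))
            = ∑ ω, μ ω * ∫ x, x r * (ℓ ω a (x a) - ℓ ω r (x r)) ∂(π ω)) := by
  classical
  have hae : ∀ ω, ∀ᵐ x ∂π ω, x ∈ X := fun ω =>
    (ae_mem_iff_measure_eq hXc.isClosed.measurableSet.nullMeasurableSet).2 (by simp [hπX])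
  choose S hSX hScard q hq0 hqS hq1 hq using fun ω =>
    exists_finset_sum_mul_eq_integral_apply (continuous_costAndRegrets hℓ ω).continuousOn hXc
      (π ω) (hae ω)
  have hsum : ∀ ω (g : (E → ℝ) → ℝ),
      ∑ x ∈ univ.biUnion S, q ω x * g x = ∑ x ∈ S ω, q ω x * g x := fun ω g =>
    (sum_subset (subset_biUnion_of_mem S (mem_univ ω)) fun y _ hy => by simp [hqS ω y hy]).symm
  refine ⟨univ.biUnion S, by simpa using hSX, ?_, q, hq0, fun ω => ?_,
    sum_congr rfl fun ω _ => ?_, fun μ r a hra => sum_congr rfl fun ω _ => ?_⟩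
  · rw [Set.toFinset_card]
    calc #(univ.biUnion S) ≤ ∑ ω, #(S ω) := card_biUnion_le
      _ ≤ ∑ _ω : Ω, (Fintype.card (Option {p : E × E // p.1 ≠ p.2}) + 1) :=
        sum_le_sum fun ω _ => hScard ω
      _ = _ := by rw [sum_const, card_univ, smul_eq_mul, Fintype.card_option]; rfl
  · simpa [hq1 ω] using hsum ω fun _ => 1
  · rw [hsum]
    exact congrArg _ (hq ω none)
  · rw [hsum]
    exact congrArg _ (hq ω (some ⟨(r, a), hra⟩))

/-- Finite-support reduction: any signaling policy given by Borel probability measures on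
a compact set `X` of flow profiles can be replaced by a finitely supported policy on at
most `|Ω|·(|J|+2)` profiles (where `J` is the set of ordered deviation pairs), preserving
the planner's cost and every obedience slack under every belief. -/
theorem finite_support_reduction
    {Ω E : Type*} [Fintype Ω] [Fintype E] [DecidableEq E]
    (X : Set (E → ℝ)) (hXc : IsCompact X) (hXm : MeasurableSet X)
    (hXflow : ∀ x ∈ X, (∀ e, 0 ≤ x e) ∧ ∑ e, x e = 1)
    (ℓ : Ω → E → ℝ → ℝ) (hℓ : ∀ ω e, Continuous (ℓ ω e))
    (π : Ω → Measure (E → ℝ))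
    (hπ : ∀ ω, IsProbabilityMeasure (π ω))
    (hπX : ∀ ω, π ω X = 1)
    (μ₀ : Ω → ℝ) (hμ₀ : (∀ ω, 0 ≤ μ₀ ω) ∧ ∑ ω, μ₀ ω = 1) :
    ∃ Xt : Finset (E → ℝ), ↑Xt ⊆ X ∧
      Xt.card ≤ Fintype.card Ω *
        (({p : E × E | p.1 ≠ p.2}.toFinset.card) + 2) ∧
      ∃ πt : Ω → (E → ℝ) → ℝ,
        (∀ ω x, 0 ≤ πt ω x) ∧
        (∀ ω, ∑ x ∈ Xt, πt ω x = 1) ∧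
        (∑ ω, μ₀ ω * ∑ x ∈ Xt, πt ω x * (∑ e, x e * ℓ ω e (x e))
          = ∑ ω, μ₀ ω * ∫ x, (∑ e, x e * ℓ ω e (x e)) ∂(π ω)) ∧
        (∀ (μ : Ω → ℝ) (r a : E), r ≠ a →
          ∑ ω, μ ω * ∑ x ∈ Xt, πt ω x * (x r * (ℓ ω a (x a) - ℓ ω r (x r)))
            = ∑ ω, μ ω * ∫ x, x r * (ℓ ω a (x a) - ℓ ω r (x r)) ∂(π ω)) :=
  finite_support_reduction_general X hXc ℓ hℓ π hπ hπX μ₀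
end
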